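/- arXiv:1908.10421 — 2 statements merged into one kernel-verified Lean document; each statement's English description precedes it below -/
import Mathlib

section
/- The series S_k = ∑_{n=1}^∞ 1/p^(k)_n converges if and only if k ≥ 2, and moreover for every k ≥ 2 one has S_{k+1} < (1/log 3)·S_k; consequently S_k → 0 as k → ∞. -/
open Filter Topology

/-- `pseq n` is the `n`-th prime number, with `pseq 1 = 2`. -/
noncomputable def pseq (n : ℕ) : ℕ := Nat.nth Nat.Prime (n - 1)

/-- `pk k n = p^(k)_n`: the `k`-fold iterate of `n ↦ p_n` applied to `n`. -/
noncomputable def pk (k n : ℕ) : ℕ := pseq^[k] n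

section aux

open Finset


lemma prime_inf : {p : ℕ | p.Prime}.Infinite := Nat.infinite_setOf_prime

lemma nth_prime_zero' : Nat.nth Nat.Prime 0 = 2 := by
  have h := Nat.nth_count (p := Nat.Prime) (n := 2) (by norm_num)
  simpa [show Nat.count Nat.Prime 2 = 0 by decide] using h

lemma nth_prime_one' : Nat.nth Nat.Prime 1 = 3 := by
  have h := Nat.nth_count (p := Nat.Prime) (n := 3) (by norm_num)
  simpa [show Nat.count Nat.Prime 3 = 1 by decide] using h

lemma nth_prime_prime (j : ℕ) : (Nat.nth Nat.Prime j).Prime :=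
  Nat.nth_mem_of_infinite prime_inf j

lemma nth_prime_lt (j : ℕ) : Nat.nth Nat.Prime j < Nat.nth Nat.Prime (j + 1) :=
  (Nat.nth_lt_nth prime_inf).2 (by omega)

lemma nth_prime_ge (j : ℕ) : j + 2 ≤ Nat.nth Nat.Prime j := by
  induction j with
  | zero => simp [nth_prime_zero']
  | succ j ih => have h := nth_prime_lt j; omega

lemma nth_prime_ge_two_mul (j : ℕ) : 2 * j + 1 ≤ Nat.nth Nat.Prime j := by
  induction j with
  | zero => simp [nth_prime_zero']
  | succ j ih =>
    rcases Nat.eq_zero_or_pos j with rfl | hj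
    · simp [nth_prime_one']
    · have hlt := nth_prime_lt j
      have ha3 : 3 ≤ Nat.nth Nat.Prime j := by omega
      have hao : Odd (Nat.nth Nat.Prime j) := (nth_prime_prime j).odd_of_ne_two (by omega)
      have hbo : Odd (Nat.nth Nat.Prime (j + 1)) :=
        (nth_prime_prime (j + 1)).odd_of_ne_two (by omega)
      have hne : Nat.nth Nat.Prime (j + 1) ≠ Nat.nth Nat.Prime j + 1 := fun h =>
        (Nat.odd_add_one.mp (h ▸ hbo)) hao
      omega

lemma pseq_ge (m : ℕ) : m ≤ pseq m := by
  rcases Nat.eq_zero_or_pos m with rfl | hm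
  · exact Nat.zero_le _
  · have := nth_prime_ge (m - 1); unfold pseq; omega

lemma pseq_ge_two_mul {m : ℕ} (hm : 1 ≤ m) : 2 * m - 1 ≤ pseq m := by
  have := nth_prime_ge_two_mul (m - 1); unfold pseq; omega

lemma pk_succ (k n : ℕ) : pk (k + 1) n = pseq (pk k n) := by
  unfold pk; rw [Function.iterate_succ_apply']

lemma pk_zero (n : ℕ) : pk 0 n = n := rfl

lemma pk_ge (k n : ℕ) : n ≤ pk k n := by
  induction k with
  | zero => simp [pk_zero]
  | succ k ih => rw [pk_succ]; exact le_trans ih (pseq_ge _)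

lemma pk_one_ge_three {k : ℕ} (hk : 2 ≤ k) : 3 ≤ pk k 1 := by
  induction k with
  | zero => omega
  | succ k ih =>
    rcases Nat.lt_or_ge k 2 with h | h
    · interval_cases k
      · omega
      · show 3 ≤ pk 2 1
        have : pk 2 1 = 3 := by
          rw [show (2:ℕ) = 1 + 1 by rfl, pk_succ, pk_succ, pk_zero]
          unfold pseq
          norm_num [nth_prime_zero', nth_prime_one']
        omega
    · rw [pk_succ]
      exact le_trans (ih h) (pseq_ge _)

lemma pk_ge_two {k : ℕ} (hk : 2 ≤ k) (n : ℕ) : 2 ≤ pk k (n + 1) := by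
  rcases Nat.eq_zero_or_pos n with rfl | hn
  · have := pk_one_ge_three hk
    simpa using (by omega : 2 ≤ pk k 1)
  · have := pk_ge k (n + 1); omega

lemma log_three_lt : Real.log 3 < 1.4 := by
  have h1 : Real.log 3 ≤ Real.log 4 := Real.log_le_log (by norm_num) (by norm_num)
  have h2 : Real.log 4 = 2 * Real.log 2 := by
    rw [show (4:ℝ) = 2 ^ 2 by norm_num, Real.log_pow]; norm_num
  have := Real.log_two_lt_d9
  nlinarith

lemma one_lt_log_three : 1 < Real.log 3 := by
  rw [Real.lt_log_iff_exp_lt (by norm_num)]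
  exact lt_trans Real.exp_one_lt_d9 (by norm_num)

lemma key_lt {m : ℕ} (hm : 2 ≤ m) : ((pseq m : ℝ))⁻¹ < (1 / Real.log 3) * (m : ℝ)⁻¹ := by
  have h2m : (2 * m - 1 : ℕ) ≤ pseq m := pseq_ge_two_mul (by omega)
  have hcast : ((2 * m - 1 : ℕ) : ℝ) = 2 * (m : ℝ) - 1 := by
    push_cast [Nat.cast_sub (by omega : 1 ≤ 2 * m)]; ring
  have hmR : (2 : ℝ) ≤ (m : ℝ) := by exact_mod_cast hm
  have hkey : Real.log 3 * (m : ℝ) < (pseq m : ℝ) := by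
    have : ((2 * m - 1 : ℕ) : ℝ) ≤ (pseq m : ℝ) := by exact_mod_cast h2m
    nlinarith [log_three_lt, one_lt_log_three]
  have hpos : (0 : ℝ) < Real.log 3 * (m : ℝ) := by
    nlinarith [one_lt_log_three]
  have := (inv_lt_inv₀ (lt_trans hpos hkey) hpos).2 hkey
  calc ((pseq m : ℝ))⁻¹ < (Real.log 3 * (m : ℝ))⁻¹ := this
    _ = (1 / Real.log 3) * (m : ℝ)⁻¹ := by rw [mul_inv]; ring

-- number of primes ≤ x is count Prime (x+1)
lemma card_primes_le (j : ℕ) :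
    #{p ∈ range (Nat.nth Nat.Prime j + 1) | p.Prime} = j + 1 := by
  rw [← Nat.count_eq_card_filter_range, Nat.count_succ,
    Nat.count_nth_of_infinite prime_inf, if_pos (Nat.nth_mem_of_infinite prime_inf j)]

lemma nth_prime_lower (j : ℕ) :
    ((j : ℝ) + 1) * Real.log ((j : ℝ) + 1) ≤ 7 * (Nat.nth Nat.Prime j : ℝ) := by
  set x := Nat.nth Nat.Prime j with hxdef
  have hx2 : 2 ≤ x := by have := nth_prime_ge j; omega
  set s := Nat.sqrt x with hsdef
  set T : Finset ℕ := {p ∈ range (x + 1) | p.Prime} with hT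
  set Tb : Finset ℕ := {p ∈ T | s < p} with hTb
  set Ts : Finset ℕ := {p ∈ T | ¬ s < p} with hTs
  have hcardT : #T = j + 1 := card_primes_le j
  have hsplit : #Tb + #Ts = #T := card_filter_add_card_filter_not _
  have hTs_card : #Ts ≤ s + 1 := by
    have : Ts ⊆ range (s + 1) := by
      intro p hp
      simp only [hTs, mem_filter, not_lt] at hp
      exact mem_range.2 (by omega)
    simpa using card_le_card this
  -- product bound
  have hpow : (s + 1) ^ #Tb ≤ 4 ^ x := by
    calc (s + 1) ^ #Tb ≤ ∏ p ∈ Tb, p := by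
          refine pow_card_le_prod _ _ _ ?_
          intro p hp
          simp only [hTb, mem_filter] at hp
          omega
      _ ≤ ∏ p ∈ T, p := by
          refine prod_le_prod_of_subset_of_one_le' (filter_subset _ _) ?_
          intro p hp _
          simp only [hT, mem_filter] at hp
          exact hp.2.one_lt.le
      _ = primorial x := rfl
      _ ≤ 4 ^ x := primorial_le_4_pow x
  -- to reals
  have hpowR : (#Tb : ℝ) * Real.log ((s : ℝ) + 1) ≤ (x : ℝ) * Real.log 4 := by
    have h1 : ((s + 1 : ℕ) : ℝ) ^ #Tb ≤ ((4 : ℕ) : ℝ) ^ x := by exact_mod_cast hpow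
    have h2 := Real.log_le_log (by positivity) h1
    rw [Real.log_pow, Real.log_pow] at h2
    push_cast at h2 ⊢
    convert h2 using 2 <;> norm_num
  have hs1pos : (0 : ℝ) < (s : ℝ) + 1 := by positivity
  have hxpos : (0 : ℝ) < (x : ℝ) := by positivity
  -- log x ≤ 2 log (s+1)
  have hlogx : Real.log (x : ℝ) ≤ 2 * Real.log ((s : ℝ) + 1) := by
    have h1 : (x : ℝ) ≤ ((s : ℝ) + 1) ^ 2 := by
      have := Nat.lt_succ_sqrt x
      have : (x : ℝ) < ((s : ℝ) + 1) * ((s : ℝ) + 1) := by exact_mod_cast this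
      nlinarith
    calc Real.log (x : ℝ) ≤ Real.log (((s : ℝ) + 1) ^ 2) := Real.log_le_log hxpos h1
      _ = 2 * Real.log ((s : ℝ) + 1) := by rw [Real.log_pow]; norm_num
  -- s ≤ sqrt x, log x ≤ 2 sqrt x, sqrt x ≤ x
  have hs_sqrt : (s : ℝ) ≤ Real.sqrt (x : ℝ) := by
    rw [Real.le_sqrt (by positivity) (by positivity)]
    exact_mod_cast Nat.sqrt_le' x
  have hsqrt_pos : (0 : ℝ) < Real.sqrt (x : ℝ) := Real.sqrt_pos.2 hxpos
  have hlog_sqrt : Real.log (x : ℝ) ≤ 2 * Real.sqrt (x : ℝ) := by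
    have h1 : Real.log (Real.sqrt (x : ℝ)) ≤ Real.sqrt (x : ℝ) - 1 :=
      Real.log_le_sub_one_of_pos hsqrt_pos
    have h2 : Real.log (x : ℝ) = 2 * Real.log (Real.sqrt (x : ℝ)) := by
      rw [Real.log_sqrt hxpos.le]; ring
    nlinarith
  have hx2R : (2 : ℝ) ≤ (x : ℝ) := by exact_mod_cast hx2
  have hsqrt_le : Real.sqrt (x : ℝ) ≤ (x : ℝ) := by
    nlinarith [Real.sq_sqrt hxpos.le, Real.sqrt_nonneg (x : ℝ)]
  have hlog_nonneg : 0 ≤ Real.log (x : ℝ) := Real.log_nonneg (by linarith)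
  -- big primes bound
  have h5 : (#Tb : ℝ) * Real.log (x : ℝ) ≤ 2 * ((x : ℝ) * Real.log 4) := by
    calc (#Tb : ℝ) * Real.log (x : ℝ) ≤ (#Tb : ℝ) * (2 * Real.log ((s : ℝ) + 1)) :=
          mul_le_mul_of_nonneg_left hlogx (by positivity)
      _ = 2 * ((#Tb : ℝ) * Real.log ((s : ℝ) + 1)) := by ring
      _ ≤ 2 * ((x : ℝ) * Real.log 4) := by linarith
  have hlog4 : Real.log 4 = 2 * Real.log 2 := by
    rw [show (4:ℝ) = 2 ^ 2 by norm_num, Real.log_pow]; norm_num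
  have h5' : (#Tb : ℝ) * Real.log (x : ℝ) ≤ 3 * (x : ℝ) := by
    have := Real.log_two_lt_d9
    nlinarith
  -- small primes bound
  have h8 : ((s : ℝ) + 1) * Real.log (x : ℝ) ≤ 4 * (x : ℝ) := by
    have h81 : ((s : ℝ) + 1) * Real.log (x : ℝ) ≤ (Real.sqrt (x:ℝ) + 1) * (2 * Real.sqrt (x:ℝ)) := by
      apply mul_le_mul (by linarith) hlog_sqrt hlog_nonneg (by positivity)
    nlinarith [Real.sq_sqrt hxpos.le]
  have hTsR : (#Ts : ℝ) ≤ (s : ℝ) + 1 := by exact_mod_cast hTs_card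
  have hcards : ((j : ℝ) + 1) = (#Tb : ℝ) + (#Ts : ℝ) := by
    have : #Tb + #Ts = j + 1 := by rw [hsplit, hcardT]
    exact_mod_cast this.symm
  have hjx : Real.log ((j : ℝ) + 1) ≤ Real.log (x : ℝ) := by
    apply Real.log_le_log (by positivity)
    have := nth_prime_ge j
    exact_mod_cast (by omega : j + 1 ≤ x)
  have hTs_log : (#Ts : ℝ) * Real.log (x : ℝ) ≤ ((s : ℝ) + 1) * Real.log (x : ℝ) :=
    mul_le_mul_of_nonneg_right hTsR hlog_nonneg
  calc ((j : ℝ) + 1) * Real.log ((j : ℝ) + 1)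
      ≤ ((j : ℝ) + 1) * Real.log (x : ℝ) :=
        mul_le_mul_of_nonneg_left hjx (by positivity)
    _ = (#Tb : ℝ) * Real.log (x : ℝ) + (#Ts : ℝ) * Real.log (x : ℝ) := by
        rw [hcards]; ring
    _ ≤ 7 * (x : ℝ) := by linarith

noncomputable def g (n : ℕ) : ℝ := (((n : ℝ) + 1) * (Real.log ((n : ℝ) + 1)) ^ 2)⁻¹

lemma g_nonneg (n : ℕ) : 0 ≤ g n := by
  unfold g
  have : 0 ≤ Real.log ((n : ℝ) + 1) := Real.log_nonneg (by push_cast; linarith [Nat.cast_nonneg (α := ℝ) n])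
  positivity

lemma g_anti ⦃m n : ℕ⦄ (hm : 0 < m) (hmn : m ≤ n) : g n ≤ g m := by
  unfold g
  have h1 : (1 : ℝ) ≤ (m : ℝ) := by exact_mod_cast hm
  have hmn' : (m : ℝ) ≤ (n : ℝ) := by exact_mod_cast hmn
  have hlm : 0 ≤ Real.log ((m : ℝ) + 1) := Real.log_nonneg (by linarith)
  have hll : Real.log ((m : ℝ) + 1) ≤ Real.log ((n : ℝ) + 1) :=
    Real.log_le_log (by linarith) (by linarith)
  have hposm : 0 < ((m : ℝ) + 1) * (Real.log ((m : ℝ) + 1)) ^ 2 := by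
    have : 0 < Real.log ((m : ℝ) + 1) := Real.log_pos (by linarith)
    positivity
  apply inv_anti₀ hposm
  apply mul_le_mul (by linarith) (by nlinarith) (by positivity) (by linarith)

lemma summable_g : Summable g := by
  have hlog2 : 0 < Real.log 2 := Real.log_pos (by norm_num)
  have hmaj : Summable (fun k : ℕ => (Real.log 2)⁻¹ ^ 2 * (((k : ℝ) + 1) ^ 2)⁻¹) := by
    apply Summable.mul_left
    have h1 : Summable (fun n : ℕ => ((n : ℝ) ^ 2)⁻¹) := by
      simpa [one_div] using Real.summable_one_div_nat_pow.2 (le_refl 2)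
    exact_mod_cast (summable_nat_add_iff 1).2 h1
  have hterm : ∀ k : ℕ, (2 : ℝ) ^ (k + 1) * g (2 ^ (k + 1)) ≤
      (Real.log 2)⁻¹ ^ 2 * (((k : ℝ) + 1) ^ 2)⁻¹ := by
    intro k
    set K := k + 1 with hK
    have hKpos : (0 : ℝ) < K := by positivity
    have h2K : (1 : ℝ) ≤ (2 : ℝ) ^ K := one_le_pow₀ (by norm_num)
    have hcast : ((2 ^ K : ℕ) : ℝ) = (2 : ℝ) ^ K := by push_cast; ring
    have hlogge : (K : ℝ) * Real.log 2 ≤ Real.log (((2 ^ K : ℕ) : ℝ) + 1) := by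
      rw [hcast]
      calc (K : ℝ) * Real.log 2 = Real.log ((2 : ℝ) ^ K) := by rw [Real.log_pow]
        _ ≤ Real.log ((2 : ℝ) ^ K + 1) := Real.log_le_log (by positivity) (by linarith)
    have hgle : g (2 ^ K) ≤ ((2 : ℝ) ^ K * ((K : ℝ) * Real.log 2) ^ 2)⁻¹ := by
      unfold g
      apply inv_anti₀ (by positivity)
      rw [hcast]
      have h0 : 0 ≤ (K : ℝ) * Real.log 2 := by positivity
      have hlogge' : (K : ℝ) * Real.log 2 ≤ Real.log ((2:ℝ) ^ K + 1) := by
        rw [hcast] at hlogge; exact hlogge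
      have hsq : ((K : ℝ) * Real.log 2) ^ 2 ≤ Real.log ((2:ℝ) ^ K + 1) ^ 2 := by nlinarith
      nlinarith [Real.log_nonneg (by linarith : (1:ℝ) ≤ (2:ℝ) ^ K + 1)]
    calc (2 : ℝ) ^ K * g (2 ^ K) ≤ (2 : ℝ) ^ K * ((2 : ℝ) ^ K * ((K : ℝ) * Real.log 2) ^ 2)⁻¹ :=
          mul_le_mul_of_nonneg_left hgle (by positivity)
      _ = (((K : ℝ) * Real.log 2) ^ 2)⁻¹ := by
          field_simp
      _ = (Real.log 2)⁻¹ ^ 2 * (((k : ℝ) + 1) ^ 2)⁻¹ := by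
          rw [hK]; push_cast; field_simp
  have hcond : Summable (fun n : ℕ => (2 : ℝ) ^ (n + 1) * g (2 ^ (n + 1))) :=
    Summable.of_nonneg_of_le
      (fun k => by have := g_nonneg (2 ^ (k + 1)); positivity) hterm hmaj
  exact (summable_condensed_iff_of_nonneg g_nonneg g_anti).mp
    ((summable_nat_add_iff (f := fun k : ℕ => (2 : ℝ) ^ k * g (2 ^ k)) 1).mp hcond)

lemma pk_two_lower (n : ℕ) :
    ((n : ℝ) + 2) * Real.log ((n : ℝ) + 2) ^ 2 ≤ 49 * (pk 2 (n + 2) : ℝ) := by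
  have hq : pk 1 (n + 2) = Nat.nth Nat.Prime (n + 1) := by
    rw [pk_succ, pk_zero]; rfl
  set q := Nat.nth Nat.Prime (n + 1) with hqdef
  have hq3 : n + 3 ≤ q := nth_prime_ge (n + 1)
  have hpk2 : pk 2 (n + 2) = Nat.nth Nat.Prime (q - 1) := by
    rw [show (2 : ℕ) = 1 + 1 by rfl, pk_succ, hq]
    rfl
  have h1 := nth_prime_lower (n + 1)
  have h2 := nth_prime_lower (q - 1)
  have hq1 : ((q - 1 : ℕ) : ℝ) + 1 = (q : ℝ) := by
    have : 1 ≤ q := by omega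
    push_cast [Nat.cast_sub this]; ring
  rw [hq1] at h2
  -- h1 : (n+2) * log (n+2) ≤ 7 q    h2 : q * log q ≤ 7 * nth (q-1) = 7 * pk 2 (n+2)
  have hlogq : Real.log ((n : ℝ) + 2) ≤ Real.log (q : ℝ) := by
    apply Real.log_le_log (by positivity)
    exact_mod_cast (by omega : n + 2 ≤ q)
  have hlogn : 0 ≤ Real.log ((n : ℝ) + 2) := Real.log_nonneg (by linarith [Nat.cast_nonneg (α := ℝ) n])
  have hqpos : (0 : ℝ) < (q : ℝ) := by exact_mod_cast (by omega : 0 < q)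
  have hlogq0 : 0 ≤ Real.log (q : ℝ) := le_trans hlogn hlogq
  have hcast1 : ((n + 1 : ℕ) : ℝ) + 1 = (n : ℝ) + 2 := by push_cast; ring
  rw [hcast1] at h1
  have hpk2R : (Nat.nth Nat.Prime (q - 1) : ℝ) = (pk 2 (n + 2) : ℝ) := by
    rw [hpk2]
  rw [hpk2R] at h2
  -- combine
  calc ((n : ℝ) + 2) * Real.log ((n : ℝ) + 2) ^ 2
      = (((n : ℝ) + 2) * Real.log ((n : ℝ) + 2)) * Real.log ((n : ℝ) + 2) := by ring
    _ ≤ (7 * (q : ℝ)) * Real.log (q : ℝ) := by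
        apply mul_le_mul h1 hlogq hlogn (by positivity)
    _ = 7 * ((q : ℝ) * Real.log (q : ℝ)) := by ring
    _ ≤ 7 * (7 * (pk 2 (n + 2) : ℝ)) := by linarith
    _ = 49 * (pk 2 (n + 2) : ℝ) := by ring

lemma summable_pk_two : Summable (fun n : ℕ => ((pk 2 (n + 1) : ℝ))⁻¹) := by
  have hshift : Summable (fun n : ℕ => ((pk 2 (n + 1 + 1) : ℝ))⁻¹) := by
    refine Summable.of_nonneg_of_le
      (g := fun n : ℕ => ((pk 2 (n + 1 + 1) : ℝ))⁻¹)
      (f := fun n => 49 * g (n + 1))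
      (fun n => by positivity) (fun n => ?_)
      (((summable_nat_add_iff 1).2 summable_g).mul_left 49)
    have hlow := pk_two_lower n
    have hc : ((n + 1 : ℕ) : ℝ) + 1 = (n : ℝ) + 2 := by push_cast; ring
    have hgval : g (n + 1) = (((n : ℝ) + 2) * Real.log ((n : ℝ) + 2) ^ 2)⁻¹ := by
      unfold g; rw [hc]
    have hpos : (0 : ℝ) < ((n : ℝ) + 2) * Real.log ((n : ℝ) + 2) ^ 2 := by
      have : 0 < Real.log ((n : ℝ) + 2) := Real.log_pos (by linarith [Nat.cast_nonneg (α := ℝ) n])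
      positivity
    show ((pk 2 (n + 1 + 1) : ℝ))⁻¹ ≤ 49 * g (n + 1)
    rw [show n + 1 + 1 = n + 2 from rfl, hgval]
    have hpk2pos : (0 : ℝ) < (pk 2 (n + 2) : ℝ) := by
      exact_mod_cast (by have := pk_ge 2 (n + 2); omega : 0 < pk 2 (n + 2))
    have h2 : (49 * (pk 2 (n + 2) : ℝ))⁻¹ ≤ (((n : ℝ) + 2) * Real.log ((n : ℝ) + 2) ^ 2)⁻¹ :=
      inv_anti₀ hpos hlow
    calc ((pk 2 (n + 2) : ℝ))⁻¹ = 49 * (49 * (pk 2 (n + 2) : ℝ))⁻¹ := by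
          field_simp
      _ ≤ 49 * (((n : ℝ) + 2) * Real.log ((n : ℝ) + 2) ^ 2)⁻¹ := by linarith
  exact (summable_nat_add_iff (f := fun n : ℕ => ((pk 2 (n + 1) : ℝ))⁻¹) 1).mp hshift

end aux

lemma not_summable_pk_zero : ¬ Summable (fun n : ℕ => ((pk 0 (n + 1) : ℝ))⁻¹) := by
  intro h
  have h' : Summable (fun n : ℕ => ((n : ℝ))⁻¹) := by
    apply (summable_nat_add_iff (f := fun n : ℕ => ((n : ℝ))⁻¹) 1).mp
    apply h.congr
    intro n
    rw [pk_zero]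
  exact Real.not_summable_natCast_inv h'

lemma not_summable_pk_one : ¬ Summable (fun n : ℕ => ((pk 1 (n + 1) : ℝ))⁻¹) := by
  intro h
  have h1 : Summable (fun n : ℕ => ((Nat.nth Nat.Prime n : ℝ))⁻¹) := by
    apply h.congr
    intro n
    rw [pk_succ, pk_zero]
    rfl
  have hinj : Function.Injective (Nat.nth Nat.Prime) := (Nat.nth_strictMono prime_inf).injective
  have hzero : ∀ x ∉ Set.range (Nat.nth Nat.Prime),
      Set.indicator {p : ℕ | p.Prime} (fun n : ℕ => (1 : ℝ) / n) x = 0 := by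
    intro x hx
    rw [Nat.range_nth_of_infinite prime_inf] at hx
    exact Set.indicator_of_notMem hx _
  have h2 : Summable (Set.indicator {p : ℕ | p.Prime} (fun n : ℕ => (1 : ℝ) / n)) := by
    rw [← Function.Injective.summable_iff hinj hzero]
    apply h1.congr
    intro n
    have hmem : Nat.nth Nat.Prime n ∈ {p : ℕ | p.Prime} := Nat.nth_mem_of_infinite prime_inf n
    simp only [Function.comp_apply, Set.indicator_of_mem hmem, one_div]
  exact not_summable_one_div_on_primes h2

lemma summable_pk {k : ℕ} (hk : 2 ≤ k) : Summable (fun n : ℕ => ((pk k (n + 1) : ℝ))⁻¹) := by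
  induction k with
  | zero => omega
  | succ k ih =>
    rcases Nat.lt_or_ge k 2 with h | h
    · interval_cases k
      · omega
      · exact summable_pk_two
    · refine Summable.of_nonneg_of_le (fun n => by positivity) (fun n => ?_) (ih h)
      have h1 : pk k (n + 1) ≤ pk (k + 1) (n + 1) := by
        rw [pk_succ]; exact pseq_ge _
      have h0 : 0 < pk k (n + 1) := by have := pk_ge k (n + 1); omega
      have h0R : (0 : ℝ) < (pk k (n + 1) : ℝ) := by exact_mod_cast h0
      exact inv_anti₀ h0R (by exact_mod_cast h1)

lemma strict_ineq {k : ℕ} (hk : 2 ≤ k) :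
    (∑' n : ℕ, ((pk (k + 1) (n + 1) : ℝ))⁻¹) <
      (1 / Real.log 3) * ∑' n : ℕ, ((pk k (n + 1) : ℝ))⁻¹ := by
  have hsumk := summable_pk hk
  have hterm : ∀ n : ℕ, ((pk (k + 1) (n + 1) : ℝ))⁻¹ <
      (1 / Real.log 3) * ((pk k (n + 1) : ℝ))⁻¹ := by
    intro n
    rw [pk_succ]
    exact key_lt (pk_ge_two hk n)
  rw [← tsum_mul_left]
  exact Summable.tsum_lt_tsum_of_nonneg (i := 0) (fun n => by positivity)
    (fun n => (hterm n).le) (hterm 0) (hsumk.mul_left _)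

theorem iterated_prime_reciprocal_series :
    (∀ k : ℕ, Summable (fun n : ℕ => ((pk k (n + 1) : ℝ))⁻¹) ↔ 2 ≤ k) ∧
    (∀ k : ℕ, 2 ≤ k →
      (∑' n : ℕ, ((pk (k + 1) (n + 1) : ℝ))⁻¹) <
        (1 / Real.log 3) * ∑' n : ℕ, ((pk k (n + 1) : ℝ))⁻¹) ∧
    Tendsto (fun k : ℕ => ∑' n : ℕ, ((pk k (n + 1) : ℝ))⁻¹) atTop (𝓝 0) := by
  refine ⟨fun k => ⟨fun hs => ?_, fun hk => summable_pk hk⟩, fun k hk => strict_ineq hk, ?_⟩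
  · by_contra hk
    interval_cases k
    · exact not_summable_pk_zero hs
    · exact not_summable_pk_one hs
  · set S : ℕ → ℝ := fun k => ∑' n : ℕ, ((pk k (n + 1) : ℝ))⁻¹ with hS
    have hS0 : ∀ k, 0 ≤ S k := fun k => tsum_nonneg (fun n => by positivity)
    set r : ℝ := 1 / Real.log 3 with hr
    have hlog3 : 0 < Real.log 3 := by linarith [one_lt_log_three]
    have hr0 : 0 < r := by positivity
    have hr1 : r < 1 := by
      rw [hr, div_lt_one hlog3]; exact one_lt_log_three
    have hkey : ∀ j : ℕ, S (j + 2) ≤ r ^ j * S 2 := by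
      intro j
      induction j with
      | zero => simp
      | succ j ih =>
        have h1 : S (j + 2 + 1) ≤ r * S (j + 2) := (strict_ineq (by omega)).le
        calc S (j + 1 + 2) = S (j + 2 + 1) := by ring_nf
          _ ≤ r * S (j + 2) := h1
          _ ≤ r * (r ^ j * S 2) := by
              exact mul_le_mul_of_nonneg_left ih hr0.le
          _ = r ^ (j + 1) * S 2 := by ring
    have hgeo : Tendsto (fun j : ℕ => r ^ j * S 2) atTop (𝓝 0) := by
      have := (tendsto_pow_atTop_nhds_zero_of_lt_one hr0.le hr1).mul_const (S 2)
      simpa using this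
    have hshift : Tendsto (fun j : ℕ => S (j + 2)) atTop (𝓝 0) :=
      tendsto_of_tendsto_of_tendsto_of_le_of_le tendsto_const_nhds hgeo
        (fun j => hS0 _) hkey
    exact (tendsto_add_atTop_iff_nat 2).mp hshift
end

section
/- Let n < m be positive integers. Then the sets P^T_n and P^T_m intersect if and only if m ∈ P^T_n. Moreover, if m = p^(k)_n ∈ P^T_n, then P^T_m ⊂ P^T_n and P^T_n \ P^T_m = { p^(1)_n, p^(2)_n, …, p^(k)_n }. -/
open Filter Topology

/-!
Since `n < p_n`, the map `n ↦ p_n` is strictly inflationary, and it is injective on the positive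
integers. Hence along a column the terms strictly increase, and two columns that meet can be
peeled back by injectivity until one of them reaches the starting point of the other: a common
value `p^(j)_n = p^(j')_m` with `n < m` forces `m = p^(j - j')_n`. The column of `m = p^(k)_n`
is then the tail of the column of `n` after its first `k` terms.
-/

open Function Set

theorem Set.InjOn.iterate_sub_eq_of_iterate_eq {α : Type*} {f : α → α} {s : Set α}
    (hinj : InjOn f s) (hmaps : MapsTo f s s) {x y : α} (hx : x ∈ s) (hy : y ∈ s) {a b : ℕ}
    (hba : b ≤ a) (h : f^[a] x = f^[b] y) : f^[a - b] x = y := by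
  rw [← Nat.add_sub_of_le hba, iterate_add_apply] at h
  exact hinj.iterate hmaps b (hmaps.iterate _ hx) hy h

theorem lt_pseq (n : ℕ) : n < pseq n := by
  have := Nat.add_two_le_nth_prime (n - 1)
  unfold pseq
  omega

-- Not injective on all of `ℕ`: truncated subtraction gives `pseq 0 = pseq 1 = 2`.
theorem pseq_injOn : InjOn pseq (Ici 1) := fun a ha b hb h => by
  have := Nat.nth_injective Nat.infinite_setOfPred_prime h
  simp only [mem_Ici] at ha hb
  omega

theorem pseq_mapsTo : MapsTo pseq (Ici 1) (Ici 1) := fun n hn =>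
  (hn.trans_lt (lt_pseq n)).le

theorem pk_add (a b n : ℕ) : pk (a + b) n = pk a (pk b n) :=
  iterate_add_apply pseq a b n

theorem strictMono_pk (n : ℕ) : StrictMono (fun j => pk j n) :=
  strictMono_nat_of_lt_succ fun j => by
    simpa only [pk, iterate_succ_apply'] using lt_pseq (pk j n)

theorem le_pk (j n : ℕ) : n ≤ pk j n :=
  (strictMono_pk n).monotone (Nat.zero_le j)

theorem pk_sub_eq_of_pk_eq {x y a b : ℕ} (hx : 1 ≤ x) (hy : 1 ≤ y) (hba : b ≤ a)
    (h : pk a x = pk b y) : pk (a - b) x = y :=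
  pseq_injOn.iterate_sub_eq_of_iterate_eq pseq_mapsTo hx hy hba h

/-- The column `P^T_n = {p^(k)_n : k ≥ 1}`. -/
def primeColumn (n : ℕ) : Set ℕ := {q | ∃ j : ℕ, 1 ≤ j ∧ pk j n = q}

theorem pk_mem_primeColumn {j : ℕ} (hj : 1 ≤ j) (n : ℕ) : pk j n ∈ primeColumn n :=
  ⟨j, hj, rfl⟩

theorem primeColumn_nonempty (n : ℕ) : (primeColumn n).Nonempty :=
  ⟨_, pk_mem_primeColumn le_rfl n⟩

theorem primeColumn_pk_subset (k n : ℕ) : primeColumn (pk k n) ⊆ primeColumn n := by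
  rintro _ ⟨j, hj, rfl⟩
  rw [← pk_add]
  exact pk_mem_primeColumn (by omega) n

theorem mem_primeColumn_of_inter_nonempty {n m : ℕ} (hn : 1 ≤ n) (hnm : n < m)
    (h : (primeColumn n ∩ primeColumn m).Nonempty) : m ∈ primeColumn n := by
  obtain ⟨q, ⟨j, -, rfl⟩, ⟨j', -, hq⟩⟩ := h
  rcases le_total j' j with hj'j | hjj'
  · have hm : pk (j - j') n = m := pk_sub_eq_of_pk_eq hn (by omega) hj'j hq.symm
    refine ⟨j - j', Nat.one_le_iff_ne_zero.mpr fun h0 => hnm.ne ?_, hm⟩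
    rwa [h0] at hm
  · have hn' : pk (j' - j) m = n := pk_sub_eq_of_pk_eq (by omega) hn hjj' hq
    have := le_pk (j' - j) m
    omega

theorem primeColumn_inter_nonempty_of_mem {n m : ℕ} (h : m ∈ primeColumn n) :
    (primeColumn n ∩ primeColumn m).Nonempty := by
  obtain ⟨k, -, rfl⟩ := h
  obtain ⟨q, hq⟩ := primeColumn_nonempty (pk k n)
  exact ⟨q, primeColumn_pk_subset k n hq, hq⟩

theorem primeColumn_diff_primeColumn_pk (k n : ℕ) :
    primeColumn n \ primeColumn (pk k n) = {q | ∃ i : ℕ, 1 ≤ i ∧ i ≤ k ∧ pk i n = q} := by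
  ext q
  constructor
  · rintro ⟨⟨j, hj, rfl⟩, hnot⟩
    refine ⟨j, hj, not_lt.mp fun hkj => hnot ⟨j - k, by omega, ?_⟩, rfl⟩
    rw [← pk_add, Nat.sub_add_cancel hkj.le]
  · rintro ⟨i, hi, hik, rfl⟩
    refine ⟨pk_mem_primeColumn hi n, ?_⟩
    rintro ⟨j, hj, hji⟩
    rw [← pk_add] at hji
    have := (strictMono_pk n).injective hji
    omega

theorem iterated_prime_columns_intersection (n m : ℕ) (hn : 1 ≤ n) (hnm : n < m) :
    (({q : ℕ | ∃ j : ℕ, 1 ≤ j ∧ pk j n = q} ∩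
      {q : ℕ | ∃ j : ℕ, 1 ≤ j ∧ pk j m = q}).Nonempty ↔
        m ∈ {q : ℕ | ∃ j : ℕ, 1 ≤ j ∧ pk j n = q}) ∧
    (∀ k : ℕ, 1 ≤ k → pk k n = m →
      {q : ℕ | ∃ j : ℕ, 1 ≤ j ∧ pk j m = q} ⊆ {q : ℕ | ∃ j : ℕ, 1 ≤ j ∧ pk j n = q} ∧
      {q : ℕ | ∃ j : ℕ, 1 ≤ j ∧ pk j n = q} \ {q : ℕ | ∃ j : ℕ, 1 ≤ j ∧ pk j m = q} =
        {q : ℕ | ∃ i : ℕ, 1 ≤ i ∧ i ≤ k ∧ pk i n = q}) := by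
  refine ⟨⟨mem_primeColumn_of_inter_nonempty hn hnm, primeColumn_inter_nonempty_of_mem⟩, ?_⟩
  rintro k - rfl
  exact ⟨primeColumn_pk_subset k n, primeColumn_diff_primeColumn_pk k n⟩
end
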